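/- Let K be an opetopic directed complex and let h be a basis element of K of dimension m. Let B be the smallest set of basis elements of K containing h and closed under the operation of taking the terms of ∂⁻a and of ∂⁺a for each positive-dimensional a in B. Then the subgroups of the chain groups of K spanned by B are closed under ∂, and together with the restricted augmentation, the distinguished bases B ∩ K_q, and the thin elements of B, they form an opetopic directed complex which is atomic of dimension m with m-dimensional basis element h. -/

import Mathlib

open Finsupp

/-- A free augmented directed complex, encoded by its distinguished graded basis:
`B` is the set of basis elements, `dim` the dimension function, `bd a` the boundary
chain of a basis element `a`, and `eps` the augmentation (supported in dimension 0). -/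
structure FADC where
  B : Type
  dim : B → ℕ
  bd : B → (B →₀ ℤ)
  eps : B → ℤ
  bd_dim : ∀ a b, b ∈ (bd a).support → dim b + 1 = dim a
  eps_dim : ∀ b, 0 < dim b → eps b = 0
  bd_bd : ∀ a : B, ((bd a).sum fun b n => n • bd b) = 0
  eps_bd : ∀ a : B, ((bd a).sum fun b n => n * eps b) = 0

namespace FADC

variable (K : FADC)

/-- The boundary homomorphism `∂`, extended to chains. -/
noncomputable def bdc (c : K.B →₀ ℤ) : K.B →₀ ℤ := c.sum fun b n => n • K.bd b

/-- The augmentation `ε`, extended to chains. -/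
noncomputable def epsc (c : K.B →₀ ℤ) : ℤ := c.sum fun b n => n * K.eps b

/-- `∂⁺c`, the positive part of `∂c`. -/
noncomputable def bdp (c : K.B →₀ ℤ) : K.B →₀ ℤ := (K.bdc c).mapRange (fun n => max n 0) (by simp)

/-- `∂⁻c`, the negative part of `∂c`. -/
noncomputable def bdm (c : K.B →₀ ℤ) : K.B →₀ ℤ := (-K.bdc c).mapRange (fun n => max n 0) (by simp)

/-- `K` is unital if `ε((∂⁻)^q a) = ε((∂⁺)^q a) = 1` for every `q`-dimensional
basis element `a`. -/
def Unital : Prop := ∀ a : K.B,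
  K.epsc (K.bdm^[K.dim a] (Finsupp.single a 1)) = 1 ∧
  K.epsc (K.bdp^[K.dim a] (Finsupp.single a 1)) = 1

/-- `K` is loop-free if its basis elements admit a (strict) partial order such that
for every basis element `a` and every `r > 0`, the basis elements occurring in
`(∂⁻)^r a` strictly precede those occurring in `(∂⁺)^r a`. -/
def LoopFree : Prop :=
  ∃ lt : K.B → K.B → Prop, IsStrictOrder K.B lt ∧
    ∀ (a : K.B) (r : ℕ), 0 < r →
      ∀ b ∈ (K.bdm^[r] (Finsupp.single a 1)).support,
        ∀ b' ∈ (K.bdp^[r] (Finsupp.single a 1)).support, lt b b'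

/-- `K` is atomic of dimension `n`. -/
def Atomic (n : ℕ) : Prop :=
  (∀ b : K.B, K.dim b ≤ n) ∧
  (∃! g : K.B, K.dim g = n) ∧
  (∀ b : K.B, K.dim b < n → ∃ a : K.B, K.dim b < K.dim a ∧
    (b ∈ (K.bdm (Finsupp.single a 1)).support ∨ b ∈ (K.bdp (Finsupp.single a 1)).support))

/-- `g_q^α(x)`: given `x_q^- = xq` and `x_{q+1}^α = c`, this is
`x_q^- + ∂⁺a_1 + … + ∂⁺a_k` where `a_1, …, a_k` are the terms of `c`. -/
noncomputable def gch (xq c : K.B →₀ ℤ) : K.B →₀ ℤ :=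
  xq + c.sum fun b n => n • K.bdp (Finsupp.single b 1)

/-- The negative chains `⟨K⟩_q^- = (∂⁻)^{n-q} g` of the canonical atom. -/
noncomputable def atomNeg (g : K.B) (n q : ℕ) : K.B →₀ ℤ :=
  if q ≤ n then K.bdm^[n - q] (Finsupp.single g 1) else 0

/-- The positive chains `⟨K⟩_q^+ = (∂⁺)^{n-q} g` of the canonical atom. -/
noncomputable def atomPos (g : K.B) (n q : ℕ) : K.B →₀ ℤ :=
  if q ≤ n then K.bdp^[n - q] (Finsupp.single g 1) else 0

end FADC

/-- Membership in `νK`: the double sequence `(x_0^-, x_0^+ | x_1^-, x_1^+ | …)`,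
given by `xm` and `xp`, is a member of `νK`. -/
structure NuMem (K : FADC) (xm xp : ℕ → (K.B →₀ ℤ)) : Prop where
  dim_m : ∀ q, ∀ b ∈ (xm q).support, K.dim b = q
  dim_p : ∀ q, ∀ b ∈ (xp q).support, K.dim b = q
  nonneg_m : ∀ q b, 0 ≤ xm q b
  nonneg_p : ∀ q b, 0 ≤ xp q b
  fin : ∃ n, ∀ q, n < q → xm q = 0 ∧ xp q = 0
  eps_m : K.epsc (xm 0) = 1
  eps_p : K.epsc (xp 0) = 1
  bd_m : ∀ q, K.bdc (xm (q + 1)) = xp q - xm q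
  bd_p : ∀ q, K.bdc (xp (q + 1)) = xp q - xm q

/-- `K` together with the class `thin` of thin basis elements is an
`n`-dimensional opetopic directed complex. -/
structure IsODC (K : FADC) (thin : K.B → Prop) (n : ℕ) : Prop where
  atomic : K.Atomic n
  loopFree : K.LoopFree
  unital : K.Unital
  thin_pos : ∀ b, thin b → 0 < K.dim b
  bdp_basis : ∀ b : K.B, 0 < K.dim b →
    ∃ a : K.B, ¬ thin a ∧ K.bdp (Finsupp.single b 1) = Finsupp.single a 1
  bdm_thin : ∀ b : K.B, thin b →
    ∃ a : K.B, ¬ thin a ∧ K.bdm (Finsupp.single b 1) = Finsupp.single a 1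

/-- An opetopic directed complex is reduced if every thin basis element is `∂⁻a`
for some other basis element `a`. -/
def ODCReduced (K : FADC) (thin : K.B → Prop) : Prop :=
  ∀ b, thin b → ∃ a, a ≠ b ∧ K.bdm (Finsupp.single a 1) = Finsupp.single b 1

/-- A network: finite sets of edges and vertices with partially defined source and
target functions; input edges are those with no source, output edges those with no
target. -/
structure Network where
  E : Type
  V : Type
  finE : Finite E
  finV : Finite V
  src : E → Option V
  tgt : E → Option V

namespace Network

variable (N : Network)

/-- One step of a path: the target of `e` is the source of `e'`. -/
def step (e e' : N.E) : Prop := ∃ v : N.V, N.tgt e = some v ∧ N.src e' = some v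

/-- There is a path from `e` to `e'`. -/
def PathTo (e e' : N.E) : Prop := Relation.ReflTransGen N.step e e'

/-- A network is acyclic if there is no nontrivial path from an edge to itself. -/
def Acyclic : Prop := ∀ e : N.E, ¬ Relation.TransGen N.step e e

/-- A network is linear if it is acyclic and consists of a single path
`e_0, v_1, e_1, …, v_k, e_k`. -/
def Linear : Prop := N.Acyclic ∧
  ∃ (k : ℕ) (e : Fin (k + 1) ≃ N.E) (v : Fin k ≃ N.V),
    N.src (e 0) = none ∧ N.tgt (e (Fin.last k)) = none ∧
    ∀ i : Fin k, N.tgt (e i.castSucc) = some (v i) ∧ N.src (e i.succ) = some (v i)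

/-- A network is confluent if it is acyclic, has a unique output edge, and every
vertex is the source of exactly one edge and the target of at least one edge. -/
def Confluent : Prop := N.Acyclic ∧ (∃! e : N.E, N.tgt e = none) ∧
  (∀ v : N.V, ∃! e : N.E, N.src e = some v) ∧ (∀ v : N.V, ∃ e : N.E, N.tgt e = some v)

end Network

/-- An opetopic network: an acyclic network with a unique output edge, together with
thin edges (which are inputs) and thin vertices (each the target of exactly one edge,
which is not thin). -/
structure OpetopicNetwork extends Network where
  thinE : E → Prop
  thinV : V → Prop
  acyclic : toNetwork.Acyclic
  out_unique : ∃! e : E, tgt e = none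
  thinE_input : ∀ e, thinE e → src e = none
  thinV_unique : ∀ v, thinV v → ∃! e, tgt e = some v
  thinV_nonthin : ∀ v e, thinV v → tgt e = some v → ¬ thinE e

/-- An opetopic network is reduced if every thin edge has a target vertex which is
the target of no other edge. -/
def OpetopicNetwork.Reduced (N : OpetopicNetwork) : Prop :=
  ∀ e, N.thinE e → ∃ v, N.tgt e = some v ∧ ∀ e', N.tgt e' = some v → e' = e

/-- `c` is a constellation from `N` to `P`: a bijection from the vertices of `N` to
the input edges of `P`, preserving thinness, such that for every edge `e` of `P`
there is exactly one edge of `N` with a source but not a target in the preimage of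
`I_e` (the input edges of `P` from which there is a path to `e`). -/
def IsConstellation (N P : OpetopicNetwork) (c : N.V → P.E) : Prop :=
  (∀ v, P.src (c v) = none) ∧
  Function.Injective c ∧
  (∀ e : P.E, P.src e = none → ∃ v, c v = e) ∧
  (∀ v, N.thinV v ↔ P.thinE (c v)) ∧
  (∀ e : P.E, ∃! e' : N.E,
    (∃ v, N.src e' = some v ∧ P.toNetwork.PathTo (c v) e) ∧
    ¬ (∃ v, N.tgt e' = some v ∧ P.toNetwork.PathTo (c v) e))

/-- An `n`-dimensional opetopic sequence `N_0 → N_1 → … → N_n`. -/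
structure OpetopicSequence (n : ℕ) where
  N : Fin (n + 1) → OpetopicNetwork
  c : ∀ q : Fin n, (N q.castSucc).V → (N q.succ).E
  constell : ∀ q : Fin n, IsConstellation (N q.castSucc) (N q.succ) (c q)
  linear0 : (N 0).toNetwork.Linear
  noThin0 : ∀ e, ¬ (N 0).thinE e
  top_single : ∃! _e : (N (Fin.last n)).E, True
  top_noV : IsEmpty (N (Fin.last n)).V

/-- An isomorphism of opetopic sequences: families of bijections on edges and
vertices preserving sources, targets, thin edges and thin vertices, and commuting
with the constellations. -/
def SeqIso (n : ℕ) (S S' : OpetopicSequence n) : Prop :=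
  ∃ (fE : ∀ q : Fin (n + 1), (S.N q).E ≃ (S'.N q).E)
    (fV : ∀ q : Fin (n + 1), (S.N q).V ≃ (S'.N q).V),
    (∀ q : Fin (n + 1),
      (∀ e v, (S.N q).src e = some v ↔ (S'.N q).src (fE q e) = some (fV q v)) ∧
      (∀ e v, (S.N q).tgt e = some v ↔ (S'.N q).tgt (fE q e) = some (fV q v)) ∧
      (∀ e, (S.N q).thinE e ↔ (S'.N q).thinE (fE q e)) ∧
      (∀ v, (S.N q).thinV v ↔ (S'.N q).thinV (fV q v))) ∧
    (∀ q : Fin n, ∀ v, fE q.succ (S.c q v) = S'.c q (fV q.castSucc v))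

/-- The opetopic sequence `S` realizes the sequence
`G_0^-(⟨K⟩) → … → G_n^-(⟨K⟩)` associated to the opetopic directed complex `K`
(with top basis element `g` and thin elements `thin`): the edges of `S.N q`
correspond bijectively to the terms of `g_q^-(⟨K⟩)`, the vertices to the terms of
`⟨K⟩_{q+1}^-`, sources, targets and thinness are as prescribed by `∂⁺`, `∂⁻` and
`thin`, and the constellations are the identity correspondences. -/
def RealizedBy (K : FADC) (thin : K.B → Prop) (n : ℕ) (g : K.B)
    (S : OpetopicSequence n) : Prop :=
  ∃ (eE : ∀ q : Fin (n + 1), (S.N q).E → K.B)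
    (eV : ∀ q : Fin (n + 1), (S.N q).V → K.B),
    (∀ q : Fin (n + 1),
      Function.Injective (eE q) ∧
      (∀ ed, eE q ed ∈ (K.gch (K.atomNeg g n q.1) (K.atomNeg g n (q.1 + 1))).support) ∧
      (∀ b ∈ (K.gch (K.atomNeg g n q.1) (K.atomNeg g n (q.1 + 1))).support,
        ∃ ed, eE q ed = b) ∧
      Function.Injective (eV q) ∧
      (∀ v, eV q v ∈ (K.atomNeg g n (q.1 + 1)).support) ∧
      (∀ b ∈ (K.atomNeg g n (q.1 + 1)).support, ∃ v, eV q v = b) ∧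
      (∀ ed v, (S.N q).src ed = some v ↔
        eE q ed ∈ (K.bdp (Finsupp.single (eV q v) 1)).support) ∧
      (∀ ed v, (S.N q).tgt ed = some v ↔
        eE q ed ∈ (K.bdm (Finsupp.single (eV q v) 1)).support) ∧
      (∀ ed, (S.N q).thinE ed ↔ thin (eE q ed)) ∧
      (∀ v, (S.N q).thinV v ↔ thin (eV q v))) ∧
    (∀ q : Fin n, ∀ v, eE q.succ (S.c q v) = eV q.castSucc v)

/-- A bundled `n`-dimensional opetopic directed complex. -/
structure ODCBundle (n : ℕ) where
  K : FADC
  thin : K.B → Prop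
  g : K.B
  dim_g : K.dim g = n
  isODC : IsODC K thin n

/-- Isomorphism of (bundled) opetopic directed complexes: a dimension- and
thinness-preserving bijection of bases commuting with boundaries and augmentations. -/
def ODCIso {n : ℕ} (A A' : ODCBundle n) : Prop :=
  ∃ φ : A.K.B ≃ A'.K.B,
    (∀ b, A'.K.dim (φ b) = A.K.dim b) ∧
    (∀ b, A'.thin (φ b) ↔ A.thin b) ∧
    (∀ b, A'.K.bd (φ b) = Finsupp.equivMapDomain φ (A.K.bd b)) ∧
    (∀ b, A'.K.eps (φ b) = A.K.eps b)
/-!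
The set `B` is closed under `∂`, because the terms of `∂a` are exactly those of `∂⁻a` and `∂⁺a`,
so it spans a subcomplex whose inclusion commutes with `∂`, `∂⁺`, `∂⁻` and `ε`. Iterated
boundaries of a basis element of `B` are therefore the same in the subcomplex as in `K`, and
loop-freeness, unitality and the conditions on thin elements restrict. Atomicity comes from the
minimality of `B`: by induction along `B`, every element other than `h` is a term of `∂a` for some
`a ∈ B`, hence of dimension less than `dim h`.
-/

namespace FADC

variable {K : FADC}

theorem bdc_single (a : K.B) : K.bdc (single a 1) = K.bd a := by
  simp [bdc, sum_single_index]

theorem bdp_single_apply (a b : K.B) : K.bdp (single a 1) b = max (K.bd a b) 0 := by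
  simp [bdp, bdc_single]

theorem bdm_single_apply (a b : K.B) : K.bdm (single a 1) b = max (-K.bd a b) 0 := by
  simp [bdm, bdc_single]

theorem mem_support_bd_iff {a b : K.B} :
    b ∈ (K.bd a).support ↔
      b ∈ (K.bdm (single a 1)).support ∨ b ∈ (K.bdp (single a 1)).support := by
  simp only [mem_support_iff, bdm_single_apply, bdp_single_apply]
  omega

def FaceClosed (K : FADC) (C : Set K.B) : Prop := ∀ a ∈ C, ∀ b ∈ (K.bd a).support, b ∈ C

theorem faceClosed_iff {C : Set K.B} :
    K.FaceClosed C ↔ ∀ a ∈ C, 0 < K.dim a → ∀ b : K.B,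
      (b ∈ (K.bdm (single a 1)).support ∨ b ∈ (K.bdp (single a 1)).support) → b ∈ C := by
  refine ⟨fun hC a ha _ b hb => hC a ha b (mem_support_bd_iff.2 hb), fun hC a ha b hb => ?_⟩
  have hdim := K.bd_dim a b hb
  exact hC a ha (by omega) b (mem_support_bd_iff.1 hb)

section Generated

variable {h : K.B} {B : Set K.B}

theorem FaceClosed.induction_of_minimal (hB : K.FaceClosed B) (hhB : h ∈ B)
    (hmin : ∀ C, h ∈ C → K.FaceClosed C → B ⊆ C) {P : K.B → Prop} (hh : P h)
    (hstep : ∀ a ∈ B, P a → ∀ b ∈ (K.bd a).support, P b) {b : K.B} (hb : b ∈ B) : P b :=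
  (hmin {b | b ∈ B ∧ P b} ⟨hhB, hh⟩
    (fun a ha b hb => ⟨hB a ha.1 b hb, hstep a ha.1 ha.2 b hb⟩) hb).2

theorem FaceClosed.eq_or_dim_lt_of_minimal (hB : K.FaceClosed B) (hhB : h ∈ B)
    (hmin : ∀ C, h ∈ C → K.FaceClosed C → B ⊆ C) {b : K.B} (hb : b ∈ B) :
    b = h ∨ K.dim b < K.dim h := by
  refine hB.induction_of_minimal hhB hmin (P := fun b => b = h ∨ K.dim b < K.dim h)
    (Or.inl rfl) (fun a _ ha b hb => ?_) hb
  have hdim := K.bd_dim a b hb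
  right
  rcases ha with rfl | ha <;> omega

theorem FaceClosed.eq_or_mem_support_bd_of_minimal (hB : K.FaceClosed B) (hhB : h ∈ B)
    (hmin : ∀ C, h ∈ C → K.FaceClosed C → B ⊆ C) {b : K.B} (hb : b ∈ B) :
    b = h ∨ ∃ a ∈ B, b ∈ (K.bd a).support :=
  hB.induction_of_minimal hhB hmin (P := fun b => b = h ∨ ∃ a ∈ B, b ∈ (K.bd a).support)
    (Or.inl rfl) (fun a ha _ _ hb => Or.inr ⟨a, ha, hb⟩) hb

end Generated

noncomputable abbrev restrict (K : FADC) (B : Set K.B) (hB : K.FaceClosed B) : FADC where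
  B := B
  dim b := K.dim b
  bd a := (K.bd a).subtypeDomain (· ∈ B)
  eps b := K.eps b
  bd_dim a b hb := K.bd_dim a b (by simpa using hb)
  eps_dim b := K.eps_dim b
  bd_bd a := by
    rw [sum_subtypeDomain_index (h := fun x n => n • (K.bd x).subtypeDomain (· ∈ B)) (hB a a.2)]
    have hsub := congrArg (subtypeDomainAddMonoidHom (M := ℤ) (p := (· ∈ B))) (K.bd_bd a)
    simp only [map_finsuppSum, map_zsmul, map_zero] at hsub
    exact hsub
  eps_bd a := by
    rw [sum_subtypeDomain_index (h := fun x n => n * K.eps x) (hB a a.2)]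
    exact K.eps_bd a

section Restrict

variable {B : Set K.B} (hB : K.FaceClosed B)

theorem embDomain_restrict_bd (a : B) :
    embDomain (.subtype _) ((K.restrict B hB).bd a) = K.bd a := by
  ext x
  by_cases hx : x ∈ B
  · exact (embDomain_apply_self (.subtype _) _ ⟨x, hx⟩).trans subtypeDomain_apply
  · rw [embDomain_of_notMem_range _ _ _ (by simpa using hx)]
    exact (notMem_support_iff.1 fun hs => hx (hB a a.2 x hs)).symm

theorem bdc_embDomain (c : B →₀ ℤ) :
    K.bdc (embDomain (.subtype _) c) = embDomain (.subtype _) ((K.restrict B hB).bdc c) := by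
  rw [bdc, bdc, sum_embDomain, embDomain_eq_mapDomain, mapDomain_sum]
  refine sum_congr fun a _ => ?_
  rw [mapDomain_smul, ← embDomain_eq_mapDomain, embDomain_restrict_bd]
  rfl

theorem semiconj_embDomain_bdp :
    Function.Semiconj (embDomain (.subtype _)) (K.restrict B hB).bdp K.bdp := fun c => by
  unfold bdp
  rw [bdc_embDomain hB, embDomain_mapRange]

theorem semiconj_embDomain_bdm :
    Function.Semiconj (embDomain (.subtype _)) (K.restrict B hB).bdm K.bdm := fun c => by
  unfold bdm
  rw [bdc_embDomain hB, embDomain_mapRange]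
  exact congrArg _ (map_neg (embDomain.addMonoidHom (M := ℤ) (.subtype _)) _)

theorem epsc_embDomain (c : B →₀ ℤ) :
    K.epsc (embDomain (.subtype _) c) = (K.restrict B hB).epsc c := by
  rw [epsc, sum_embDomain]
  rfl

theorem iterate_bdp_single (r : ℕ) (a : B) :
    K.bdp^[r] (single a 1) = embDomain (.subtype _) ((K.restrict B hB).bdp^[r] (single a 1)) := by
  rw [((semiconj_embDomain_bdp hB).iterate_right r).eq, embDomain_single]
  rfl

theorem iterate_bdm_single (r : ℕ) (a : B) :
    K.bdm^[r] (single a 1) = embDomain (.subtype _) ((K.restrict B hB).bdm^[r] (single a 1)) := by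
  rw [((semiconj_embDomain_bdm hB).iterate_right r).eq, embDomain_single]
  rfl

theorem mem_support_embDomain_subtype {c : B →₀ ℤ} {b : B} :
    (b : K.B) ∈ (embDomain (.subtype _) c).support ↔ b ∈ c.support := by
  rw [support_embDomain]
  exact Finset.mem_map' _

theorem LoopFree.restrict (hK : K.LoopFree) : (K.restrict B hB).LoopFree := by
  obtain ⟨lt, hlt, hK⟩ := hK
  refine ⟨fun x y => lt x y,
    { irrefl := fun a => hlt.irrefl a, trans := fun a b c => hlt.trans a b c },
    fun a r hr b hb b' hb' => hK a r hr b ?_ b' ?_⟩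
  · rwa [iterate_bdm_single hB, mem_support_embDomain_subtype]
  · rwa [iterate_bdp_single hB, mem_support_embDomain_subtype]

theorem Unital.restrict (hK : K.Unital) : (K.restrict B hB).Unital := fun a => by
  obtain ⟨hm, hp⟩ := hK a
  rw [iterate_bdm_single hB, epsc_embDomain hB] at hm
  rw [iterate_bdp_single hB, epsc_embDomain hB] at hp
  exact ⟨hm, hp⟩

theorem _root_.IsODC.restrict {thin : K.B → Prop} {n m : ℕ} (hK : IsODC K thin n)
    (hA : (K.restrict B hB).Atomic m) : IsODC (K.restrict B hB) (fun b => thin b) m where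
  atomic := hA
  loopFree := hK.loopFree.restrict hB
  unital := hK.unital.restrict hB
  thin_pos b := hK.thin_pos b
  bdp_basis b hb := by
    obtain ⟨a, hna, ha⟩ := hK.bdp_basis b hb
    have hc := (semiconj_embDomain_bdp hB (single b 1)).trans
      ((congrArg K.bdp (embDomain_single _ _ _)).trans ha)
    obtain ⟨a', hbd, rfl⟩ := single_of_embDomain_single _ _ _ _ one_ne_zero hc
    exact ⟨a', hna, hbd⟩
  bdm_thin b hb := by
    obtain ⟨a, hna, ha⟩ := hK.bdm_thin b hb
    have hc := (semiconj_embDomain_bdm hB (single b 1)).trans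
      ((congrArg K.bdm (embDomain_single _ _ _)).trans ha)
    obtain ⟨a', hbd, rfl⟩ := single_of_embDomain_single _ _ _ _ one_ne_zero hc
    exact ⟨a', hna, hbd⟩

theorem FaceClosed.atomic_restrict_of_minimal {h : K.B} (hhB : h ∈ B)
    (hmin : ∀ C, h ∈ C → K.FaceClosed C → B ⊆ C) : (K.restrict B hB).Atomic (K.dim h) := by
  refine ⟨fun b => ?_, ⟨⟨h, hhB⟩, rfl, fun b hb => ?_⟩, fun b hb => ?_⟩
  · rcases hB.eq_or_dim_lt_of_minimal hhB hmin b.2 with hbh | hlt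
    · exact (congrArg K.dim hbh).le
    · exact hlt.le
  · rcases hB.eq_or_dim_lt_of_minimal hhB hmin b.2 with hbh | hlt
    · exact Subtype.ext hbh
    · exact absurd hb hlt.ne
  · obtain hbh | ⟨a, haB, hba⟩ := hB.eq_or_mem_support_bd_of_minimal hhB hmin b.2
    · exact absurd (congrArg K.dim hbh) hb.ne
    · have hdim := K.bd_dim a b hba
      refine ⟨⟨a, haB⟩, show K.dim b < K.dim a by omega, mem_support_bd_iff.1 ?_⟩
      simpa using hba

end Restrict

end FADC

/-- Section 6: the atomic subcomplex generated by a basis element `h` of dimension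
`m` in an opetopic directed complex `K` (spanned by the smallest set `B` of basis
elements containing `h` and closed under taking terms of `∂⁻` and `∂⁺`) is closed
under `∂` and is itself an opetopic directed complex, atomic of dimension `m` with
top basis element `h`. -/
theorem stmt18 (K : FADC) (thin : K.B → Prop) (n : ℕ) (hK : IsODC K thin n)
    (h : K.B) (m : ℕ) (hm : K.dim h = m) (B : Set K.B)
    (hB1 : h ∈ B)
    (hB2 : ∀ a ∈ B, 0 < K.dim a → ∀ b : K.B,
      (b ∈ (K.bdm (Finsupp.single a 1)).support ∨
        b ∈ (K.bdp (Finsupp.single a 1)).support) → b ∈ B)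
    (hB3 : ∀ C : Set K.B, h ∈ C →
      (∀ a ∈ C, 0 < K.dim a → ∀ b : K.B,
        (b ∈ (K.bdm (Finsupp.single a 1)).support ∨
          b ∈ (K.bdp (Finsupp.single a 1)).support) → b ∈ C) →
      B ⊆ C) :
    (∀ a ∈ B, ∀ b ∈ (K.bd a).support, b ∈ B) ∧
    ∃ (L : FADC) (thinL : L.B → Prop) (φ : L.B → K.B),
      Function.Injective φ ∧ Set.range φ = B ∧
      (∀ b : L.B, K.dim (φ b) = L.dim b) ∧
      (∀ b : L.B, K.bd (φ b) = Finsupp.mapDomain φ (L.bd b)) ∧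
      (∀ b : L.B, K.eps (φ b) = L.eps b) ∧
      (∀ b : L.B, thinL b ↔ thin (φ b)) ∧
      IsODC L thinL m ∧
      ∃ h0 : L.B, φ h0 = h ∧ L.dim h0 = m := by
  subst hm
  have hB : K.FaceClosed B := FADC.faceClosed_iff.2 hB2
  have hmin : ∀ C, h ∈ C → K.FaceClosed C → B ⊆ C :=
    fun C hC hCl => hB3 C hC (FADC.faceClosed_iff.1 hCl)
  refine ⟨hB, K.restrict B hB, fun b => thin b, Subtype.val, Subtype.val_injective,
    Subtype.range_val, fun _ => rfl, fun b => ?_, fun _ => rfl, fun _ => Iff.rfl,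
    hK.restrict hB (hB.atomic_restrict_of_minimal hB1 hmin), ⟨h, hB1⟩, rfl, rfl⟩
  rw [← FADC.embDomain_restrict_bd hB, embDomain_eq_mapDomain]
  rfl
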